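/- arXiv:2107.03972 — 2 statements merged into one kernel-verified Lean document; each statement's English description precedes it below -/
import Mathlib

section
/- Let c ∈ 𝒞 be a connective with f_c(0,…,0) = f_c(1,…,1) = 0 and f_c(a⃗) = 1 for some a⃗ ∈ {0,1}^{ar(c)}, and let p be a propositional symbol. Then there exists a propositional formula φ over 𝒞 (built only from propositional symbols and c) such that the sequent φ ⟹ p is valid in all classical models but not valid in some constant-domain Kripke model; i.e., φ ⟹ p ∈ FOCLS(𝒞) \ FOCDS(𝒞). -/
open Classical


/-- First-order formulas over a set `C` of propositional connectives
(each `c : C` has arity `ar c`).  Individual variables and, for each arity `n`,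
the `n`-ary predicate symbols are indexed by `ℕ`. -/
inductive Formula (C : Type) (ar : C → ℕ) : Type
  | atom (n : ℕ) (p : ℕ) (v : Fin n → ℕ)
  | conn (c : C) (args : Fin (ar c) → Formula C ar)
  | all (x : ℕ) (φ : Formula C ar)
  | ex  (x : ℕ) (φ : Formula C ar)

/-- A classical first-order model: a nonempty domain `D` (a set in an ambient
type `U`) together with an interpretation of every `n`-ary predicate symbol. -/
structure CModel where
  U : Type
  D : Set U
  D_ne : D.Nonempty
  I : (n : ℕ) → ℕ → (Fin n → U) → Bool

/-- Classical interpretation of a formula (value in `{0,1}`, coded by `Bool`),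
where `tf c` is the truth function of the connective `c`. -/
noncomputable def cVal {C : Type} {ar : C → ℕ}
    (tf : (c : C) → (Fin (ar c) → Bool) → Bool) (M : CModel) :
    Formula C ar → (ℕ → M.U) → Bool
  | .atom n p v, ρ => M.I n p (fun i => ρ (v i))
  | .conn c args, ρ => tf c (fun i => cVal tf M (args i) ρ)
  | .all x φ, ρ => decide (∀ a ∈ M.D, cVal tf M φ (Function.update ρ x a) = true)
  | .ex x φ, ρ => decide (∃ a ∈ M.D, cVal tf M φ (Function.update ρ x a) = true)

/-- A first-order Kripke model: a nonempty preordered set of worlds `W`,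
monotone nonempty domains `D w` (sets in an ambient type `U`), and hereditary
interpretations of the predicate symbols. -/
structure KModel where
  W : Type
  W_ne : Nonempty W
  R : W → W → Prop
  refl : ∀ w, R w w
  trans : ∀ {w v u}, R w v → R v u → R w u
  U : Type
  D : W → Set U
  D_ne : ∀ w, (D w).Nonempty
  D_mono : ∀ {w v}, R w v → D w ⊆ D v
  I : W → (n : ℕ) → ℕ → (Fin n → U) → Bool
  hered : ∀ {w v}, R w v → ∀ n p (a : Fin n → U),
      (∀ i, a i ∈ D w) → I w n p a = true → I v n p a = true

/-- Kripke interpretation of a formula at a world (value in `{0,1}`). -/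
noncomputable def kVal {C : Type} {ar : C → ℕ}
    (tf : (c : C) → (Fin (ar c) → Bool) → Bool) (K : KModel) :
    Formula C ar → K.W → (ℕ → K.U) → Bool
  | .atom n p v, w, ρ => K.I w n p (fun i => ρ (v i))
  | .conn c args, w, ρ =>
      decide (∀ u, K.R w u → tf c (fun i => kVal tf K (args i) u ρ) = true)
  | .all x φ, w, ρ =>
      decide (∀ u, K.R w u → ∀ a ∈ K.D u,
        kVal tf K φ u (Function.update ρ x a) = true)
  | .ex x φ, w, ρ =>
      decide (∃ a ∈ K.D w, kVal tf K φ w (Function.update ρ x a) = true)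

/-- A Kripke model has constant domains. -/
def ConstDom (K : KModel) : Prop := ∀ w v : K.W, K.D w = K.D v

/-- The sequent `Γ ⟹ Δ` is valid in all classical models (`Γ ⟹ Δ ∈ FOCLS(𝒞)`):
at every classical model and assignment into the domain, its interpretation is 1,
i.e. it is never the case that everything in `Γ` gets 1 and everything in `Δ` gets 0. -/
def SeqCValid {C : Type} {ar : C → ℕ} (tf : (c : C) → (Fin (ar c) → Bool) → Bool)
    (Γ Δ : Set (Formula C ar)) : Prop :=
  ∀ M : CModel, ∀ ρ : ℕ → M.U, (∀ x, ρ x ∈ M.D) →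
    ¬ ((∀ φ ∈ Γ, cVal tf M φ ρ = true) ∧ (∀ φ ∈ Δ, cVal tf M φ ρ = false))

/-- The sequent `Γ ⟹ Δ` is valid in all constant-domain Kripke models
(`Γ ⟹ Δ ∈ FOCDS(𝒞)`). -/
def SeqCDValid {C : Type} {ar : C → ℕ} (tf : (c : C) → (Fin (ar c) → Bool) → Bool)
    (Γ Δ : Set (Formula C ar)) : Prop :=
  ∀ K : KModel, ConstDom K → ∀ w : K.W, ∀ ρ : ℕ → K.U, (∀ x, ρ x ∈ K.D w) →
    ¬ ((∀ φ ∈ Γ, kVal tf K φ w ρ = true) ∧ (∀ φ ∈ Δ, kVal tf K φ w ρ = false))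

/-- A truth function is monotonic. -/
def MonoTF {n : ℕ} (f : (Fin n → Bool) → Bool) : Prop :=
  ∀ a b : Fin n → Bool, (∀ i, a i ≤ b i) → f a ≤ f b

/-- Propositional formulas over `C`: built from propositional symbols
(indexed by `ℕ`) by the connectives in `C`. -/
inductive PFormula (C : Type) (ar : C → ℕ) : Type
  | atom (p : ℕ)
  | conn (c : C) (args : Fin (ar c) → PFormula C ar)

/-- Value of a propositional formula under a classical valuation `v`. -/
def pcVal {C : Type} {ar : C → ℕ} (tf : (c : C) → (Fin (ar c) → Bool) → Bool)
    (v : ℕ → Bool) : PFormula C ar → Bool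
  | .atom p => v p
  | .conn c args => tf c (fun i => pcVal tf v (args i))

/-- A propositional Kripke model. -/
structure PKModel where
  W : Type
  W_ne : Nonempty W
  R : W → W → Prop
  refl : ∀ w, R w w
  trans : ∀ {w v u}, R w v → R v u → R w u
  I : W → ℕ → Bool
  hered : ∀ {w v}, R w v → ∀ p, I w p = true → I v p = true

/-- Kripke interpretation of a propositional formula at a world. -/
noncomputable def pkVal {C : Type} {ar : C → ℕ}
    (tf : (c : C) → (Fin (ar c) → Bool) → Bool) (K : PKModel) :
    PFormula C ar → K.W → Bool
  | .atom p, w => K.I w p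
  | .conn c args, w =>
      decide (∀ u, K.R w u → tf c (fun i => pkVal tf K (args i) u) = true)

/-- The propositional sequent `Γ ⟹ Δ` is valid under all classical valuations
(`Γ ⟹ Δ ∈ CLS(𝒞)`). -/
def PSeqCValid {C : Type} {ar : C → ℕ} (tf : (c : C) → (Fin (ar c) → Bool) → Bool)
    (Γ Δ : Set (PFormula C ar)) : Prop :=
  ∀ v : ℕ → Bool,
    ¬ ((∀ φ ∈ Γ, pcVal tf v φ = true) ∧ (∀ φ ∈ Δ, pcVal tf v φ = false))

/-- The propositional sequent `Γ ⟹ Δ` is valid at all worlds of all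
propositional Kripke models (`Γ ⟹ Δ ∈ ILS(𝒞)`). -/
def PSeqKValid {C : Type} {ar : C → ℕ} (tf : (c : C) → (Fin (ar c) → Bool) → Bool)
    (Γ Δ : Set (PFormula C ar)) : Prop :=
  ∀ K : PKModel, ∀ w : K.W,
    ¬ ((∀ φ ∈ Γ, pkVal tf K φ w = true) ∧ (∀ φ ∈ Δ, pkVal tf K φ w = false))

/-- The formula `α` is classically valid (`α ∈ FOCL(𝒞)`). -/
def FmlCValid {C : Type} {ar : C → ℕ} (tf : (c : C) → (Fin (ar c) → Bool) → Bool)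
    (α : Formula C ar) : Prop :=
  ∀ M : CModel, ∀ ρ : ℕ → M.U, (∀ x, ρ x ∈ M.D) → cVal tf M α ρ = true

/-- The formula `α` is CD-valid (`α ∈ FOCD(𝒞)`): valid in all constant-domain
Kripke models. -/
def FmlCDValid {C : Type} {ar : C → ℕ} (tf : (c : C) → (Fin (ar c) → Bool) → Bool)
    (α : Formula C ar) : Prop :=
  ∀ K : KModel, ConstDom K → ∀ w : K.W, ∀ ρ : ℕ → K.U, (∀ x, ρ x ∈ K.D w) →
    kVal tf K α w ρ = true

/-- `α` is a propositional formula built only from propositional symbols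
(0-ary predicate symbols) and the connective `c`. -/
inductive IsPropC {C : Type} {ar : C → ℕ} (c : C) : Formula C ar → Prop
  | atom (p : ℕ) (v : Fin 0 → ℕ) : IsPropC c (.atom 0 p v)
  | conn (args : Fin (ar c) → Formula C ar) :
      (∀ i, IsPropC c (args i)) → IsPropC c (.conn c args)

/-- A propositional formula viewed as a first-order formula (propositional
symbols become 0-ary predicate symbols). -/
def PFormula.toFO {C : Type} {ar : C → ℕ} : PFormula C ar → Formula C ar
  | .atom p => .atom 0 p (fun i => i.elim0)
  | .conn c args => .conn c (fun i => (args i).toFO)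

/-!
Put `g x y := f_c(a⃗[x, y])`, where `a⃗[x, y]` has `x` at the positions where `a⃗` is `1` and `y`
elsewhere, so that `g x x = 0` and `g 1 0 = 1`. For a fresh symbol `r` take
`φ := g (g r (g r p)) (g p p)`. Classically `p = 0` forces `φ = 0`, whatever `r` is.
In the constant-domain model with worlds `0 ⪯ 1`, `r` true everywhere and `p` true only at `1`,
`g p p` is false everywhere, and `g r p` fails at `1`, hence everywhere; so `g r (g r p)` holds
everywhere and `φ` holds at `0`, where `p` fails.
-/

namespace Formula

variable {C : Type} {ar : C → ℕ}

def propSymbol (p : ℕ) : Formula C ar := .atom 0 p (fun i => i.elim0)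

def conn₂ (c : C) (a : Fin (ar c) → Bool) (X Y : Formula C ar) : Formula C ar :=
  .conn c (fun i => if a i then X else Y)

theorem isPropC_propSymbol (c : C) (p : ℕ) : IsPropC c (propSymbol p : Formula C ar) :=
  .atom p _

end Formula

open Formula

theorem IsPropC.conn₂ {C : Type} {ar : C → ℕ} {c : C} (a : Fin (ar c) → Bool)
    {X Y : Formula C ar} (hX : IsPropC c X) (hY : IsPropC c Y) : IsPropC c (conn₂ c a X Y) :=
  .conn _ fun i => by split <;> assumption

section BinaryConnective

variable {C : Type} {ar : C → ℕ} (tf : (c : C) → (Fin (ar c) → Bool) → Bool)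
  (c : C) (a : Fin (ar c) → Bool)

def binTF (x y : Bool) : Bool := tf c (fun i => if a i then x else y)

variable {tf c}

theorem binTF_self (h0 : tf c (fun _ => false) = false) (h1 : tf c (fun _ => true) = false)
    (x : Bool) : binTF tf c a x x = false := by
  cases x <;> simpa [binTF]

theorem binTF_true_false {a : Fin (ar c) → Bool} (ha : tf c a = true) :
    binTF tf c a true false = true := by
  simpa [binTF]

theorem cVal_conn₂ (M : CModel) (X Y : Formula C ar) (ρ : ℕ → M.U) :
    cVal tf M (conn₂ c a X Y) ρ = binTF tf c a (cVal tf M X ρ) (cVal tf M Y ρ) := by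
  simp only [conn₂, cVal, binTF, apply_ite (cVal tf M), ite_apply]

theorem kVal_conn₂ (K : KModel) (X Y : Formula C ar) (w : K.W) (ρ : ℕ → K.U) :
    kVal tf K (conn₂ c a X Y) w ρ = true ↔
      ∀ u, K.R w u → binTF tf c a (kVal tf K X u ρ) (kVal tf K Y u ρ) = true := by
  simp only [conn₂, kVal, binTF, apply_ite (kVal tf K), ite_apply, decide_eq_true_eq]

end BinaryConnective

theorem nested_eq_false_of_self {g : Bool → Bool → Bool} (hg : ∀ x, g x x = false) (r : Bool) :
    g (g r (g r false)) (g false false) = false := by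
  cases r <;> cases h : g true false <;> simp [hg, h]

section Separator

variable {C : Type} {ar : C → ℕ} {tf : (c : C) → (Fin (ar c) → Bool) → Bool} {c : C}
  {a : Fin (ar c) → Bool}

def separator (c : C) (a : Fin (ar c) → Bool) (p : ℕ) : Formula C ar :=
  conn₂ c a (conn₂ c a (propSymbol (p + 1)) (conn₂ c a (propSymbol (p + 1)) (propSymbol p)))
    (conn₂ c a (propSymbol p) (propSymbol p))

theorem isPropC_separator (c : C) (a : Fin (ar c) → Bool) (p : ℕ) :
    IsPropC c (separator c a p : Formula C ar) :=
  let hp := isPropC_propSymbol c p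
  let hr := isPropC_propSymbol c (p + 1)
  .conn₂ a (.conn₂ a hr (.conn₂ a hr hp)) (.conn₂ a hp hp)

theorem cVal_separator_eq_false (h0 : tf c (fun _ => false) = false)
    (h1 : tf c (fun _ => true) = false) (M : CModel) {p : ℕ} {ρ : ℕ → M.U}
    (hp : cVal tf M (propSymbol p) ρ = false) : cVal tf M (separator c a p) ρ = false := by
  simp only [separator, cVal_conn₂, hp]
  exact nested_eq_false_of_self (binTF_self a h0 h1) _

theorem kVal_conn₂_self (h0 : tf c (fun _ => false) = false)
    (h1 : tf c (fun _ => true) = false) (K : KModel) (X : Formula C ar) (w : K.W)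
    (ρ : ℕ → K.U) : kVal tf K (conn₂ c a X X) w ρ = false := by
  rw [← Bool.not_eq_true, kVal_conn₂]
  intro h
  simpa [binTF_self a h0 h1] using h w (K.refl w)

-- `p` holds only at the top world `true`, the fresh symbol `p + 1` everywhere.
abbrev twoWorldModel (p : ℕ) : KModel where
  W := Bool
  W_ne := ⟨false⟩
  R := (· ≤ ·)
  refl := le_refl
  trans := le_trans
  U := Unit
  D := fun _ => Set.univ
  D_ne := fun _ => Set.univ_nonempty
  D_mono := fun _ => subset_rfl
  I := fun w _ q _ => decide (q = p + 1) || (decide (q = p) && w)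
  hered := by
    intro w v hwv _ q _ _
    simp only [Bool.or_eq_true, Bool.and_eq_true, decide_eq_true_eq]
    exact Or.imp_right (And.imp_right (Bool.le_iff_imp.mp hwv))

theorem constDom_twoWorldModel (p : ℕ) : ConstDom (twoWorldModel p) := fun _ _ => rfl

theorem kVal_twoWorldModel_propSymbol (p : ℕ) (w : Bool) (ρ : ℕ → Unit) :
    kVal tf (twoWorldModel p) (propSymbol p) w ρ = w := by
  simp [kVal, propSymbol, twoWorldModel]

theorem kVal_twoWorldModel_propSymbol_succ (p : ℕ) (w : Bool) (ρ : ℕ → Unit) :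
    kVal tf (twoWorldModel p) (propSymbol (p + 1)) w ρ = true := by
  simp [kVal, propSymbol, twoWorldModel]

theorem kVal_twoWorldModel_separator (h0 : tf c (fun _ => false) = false)
    (h1 : tf c (fun _ => true) = false) (ha : tf c a = true) (p : ℕ) (ρ : ℕ → Unit) :
    kVal tf (twoWorldModel p) (separator c a p) false ρ = true := by
  have hX : ∀ w, kVal tf (twoWorldModel p)
      (conn₂ c a (propSymbol (p + 1)) (propSymbol p)) w ρ = false := by
    intro w
    rw [← Bool.not_eq_true, kVal_conn₂]
    intro h
    simpa [kVal_twoWorldModel_propSymbol, kVal_twoWorldModel_propSymbol_succ,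
      binTF_self a h0 h1] using h true (le_top (a := w))
  have hY : ∀ w, kVal tf (twoWorldModel p)
      (conn₂ c a (propSymbol (p + 1)) (conn₂ c a (propSymbol (p + 1)) (propSymbol p))) w ρ
        = true := by
    intro w
    rw [kVal_conn₂]
    intro u _
    rw [kVal_twoWorldModel_propSymbol_succ, hX, binTF_true_false ha]
  rw [separator, kVal_conn₂]
  intro u _
  rw [hY, kVal_conn₂_self h0 h1, binTF_true_false ha]

end Separator

/-- if `f_c(0,…,0) = f_c(1,…,1) = 0` and `f_c(a⃗) = 1` for some
`a⃗`, then for any propositional symbol `p` there is a propositional formula `φ`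
built only from propositional symbols and `c` with
`φ ⟹ p ∈ FOCLS(𝒞) \ FOCDS(𝒞)`. -/
theorem stmt_15 (C : Type) (ar : C → ℕ) (tf : (c : C) → (Fin (ar c) → Bool) → Bool)
    (c : C) (h0 : tf c (fun _ => false) = false) (h1 : tf c (fun _ => true) = false)
    (ha : ∃ a : Fin (ar c) → Bool, tf c a = true) (p : ℕ) :
    ∃ φ : Formula C ar, IsPropC c φ ∧
      SeqCValid tf {φ} {Formula.atom 0 p (fun i => i.elim0)} ∧
      ¬ SeqCDValid tf {φ} {Formula.atom 0 p (fun i => i.elim0)} := by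
  obtain ⟨a, ha⟩ := ha
  refine ⟨separator c a p, isPropC_separator c a p, ?_, ?_⟩
  · rintro M ρ - ⟨hφ, hp⟩
    simp only [Set.mem_singleton_iff, forall_eq] at hφ hp
    rw [cVal_separator_eq_false h0 h1 M hp] at hφ
    exact Bool.false_ne_true hφ
  · intro hvalid
    refine hvalid (twoWorldModel p) (constDom_twoWorldModel p) false (fun _ => ())
      (fun _ => trivial) ⟨?_, ?_⟩ <;> simp only [Set.mem_singleton_iff, forall_eq]
    · exact kVal_twoWorldModel_separator h0 h1 ha p _
    · exact kVal_twoWorldModel_propSymbol p false _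
end

section
/- Let c ∈ 𝒞 be a connective whose truth function f_c is monotonic, let K = ⟨W, ⪯, D, I⟩ be any Kripke model, w ∈ W, ρ an assignment in D(w), and α₁,…,α_{ar(c)} formulas over 𝒞. Then ‖c(α₁,…,α_{ar(c)})‖_{K,w}^ρ = f_c(‖α₁‖_{K,w}^ρ,…,‖α_{ar(c)}‖_{K,w}^ρ); that is, for monotonic connectives the Kripke interpretation of c(α₁,…,αₙ) at w is determined by the interpretations of the arguments at w alone. -/
open Classical


/-! Truth in a Kripke model is persistent along `⪯`, so for a monotonic `f_c` the value
`f_c(‖α₁‖_w,…,‖αₙ‖_w)` can only grow from `w` to its successors; the quantification over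
all `v ⪰ w` in the clause for `c` is therefore decided at `v = w` itself. -/

theorem update_mem_of_forall_mem {α β : Type*} [DecidableEq α] {s : Set β} {ρ : α → β}
    (hρ : ∀ x, ρ x ∈ s) (x : α) {a : β} (ha : a ∈ s) : ∀ y, Function.update ρ x a y ∈ s :=
  (Function.forall_update_iff ρ fun _ b => b ∈ s).2 ⟨ha, fun y _ => hρ y⟩

theorem kVal_le_of_R {C : Type} {ar : C → ℕ} (tf : (c : C) → (Fin (ar c) → Bool) → Bool)
    (K : KModel) (φ : Formula C ar) {w v : K.W} {ρ : ℕ → K.U} (hρ : ∀ x, ρ x ∈ K.D w)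
    (hwv : K.R w v) : kVal tf K φ w ρ ≤ kVal tf K φ v ρ := by
  induction φ generalizing w v ρ with
  | atom n p x => exact Bool.le_iff_imp.2 (K.hered hwv n p _ fun i => hρ (x i))
  | conn c args _ =>
    simp only [kVal, Bool.le_iff_imp, decide_eq_true_eq]
    exact fun h u hvu => h u (K.trans hwv hvu)
  | all x φ _ =>
    simp only [kVal, Bool.le_iff_imp, decide_eq_true_eq]
    exact fun h u hvu => h u (K.trans hwv hvu)
  | ex x φ ih =>
    simp only [kVal, Bool.le_iff_imp, decide_eq_true_eq]
    rintro ⟨a, ha, h⟩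
    exact ⟨a, K.D_mono hwv ha,
      Bool.le_iff_imp.1 (ih (update_mem_of_forall_mem hρ x ha) hwv) h⟩

/-- for a monotonic connective `c`, the Kripke interpretation of
`c(α₁,…,αₙ)` at `w` is determined by the interpretations of the arguments at
`w` alone: `‖c(α₁,…,αₙ)‖_{K,w}^ρ = f_c(‖α₁‖_{K,w}^ρ,…,‖αₙ‖_{K,w}^ρ)`. -/
theorem stmt_16 (C : Type) (ar : C → ℕ) (tf : (c : C) → (Fin (ar c) → Bool) → Bool)
    (c : C) (hmono : MonoTF (tf c)) (K : KModel) (w : K.W) (ρ : ℕ → K.U)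
    (hρ : ∀ x, ρ x ∈ K.D w) (args : Fin (ar c) → Formula C ar) :
    kVal tf K (Formula.conn c args) w ρ =
      tf c (fun i => kVal tf K (args i) w ρ) := by
  have hgrow : ∀ u, K.R w u →
      tf c (fun i => kVal tf K (args i) w ρ) ≤ tf c (fun i => kVal tf K (args i) u ρ) :=
    fun u hwu => hmono _ _ fun i => kVal_le_of_R tf K (args i) hρ hwu
  rw [kVal, Bool.eq_iff_iff, decide_eq_true_eq]
  exact ⟨fun h => h w (K.refl w), fun h u hwu => Bool.le_iff_imp.1 (hgrow u hwu) h⟩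
end
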